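/- Let R be a unital alternative ring with nontrivial idempotent e₁ and e₂ = 1 − e₁, k-torsion free for every k ∈ {2, 3, n−1, n−3} with k ≥ 1, satisfying conditions (1), (2), (3) and (4), and let D : R → R be a multiplicative Lie n-derivation (n ≥ 2) satisfying conditions (a), (b), (c) and with D(e₁) ∈ Z(R). Then for i ≠ j in {1,2}, for all a ∈ R_ij and b ∈ R_ji, one has D(a*b) − (D(a)*b + a*D(b)) ∈ Z(R). -/

import Mathlib

/-- The commutative center of a (possibly non-associative, non-unital) ring. -/
def rctr (R : Type*) [NonUnitalNonAssocRing R] : Set R := {z | ∀ x, z * x = x * z}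

/-- `R` is an alternative ring. -/
def IsAlt (R : Type*) [NonUnitalNonAssocRing R] : Prop :=
  ∀ x y : R, (x * x) * y = x * (x * y) ∧ (y * x) * x = y * (x * x)

/-- Peirce components relative to an idempotent `e`. -/
def P11 {R : Type*} [NonUnitalNonAssocRing R] (e : R) : Set R := {x | e * x = x ∧ x * e = x}
def P12 {R : Type*} [NonUnitalNonAssocRing R] (e : R) : Set R := {x | e * x = x ∧ x * e = 0}
def P21 {R : Type*} [NonUnitalNonAssocRing R] (e : R) : Set R := {x | e * x = 0 ∧ x * e = x}
def P22 {R : Type*} [NonUnitalNonAssocRing R] (e : R) : Set R := {x | e * x = 0 ∧ x * e = 0}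

/-- The iterated commutator `p_n`: `p_1(x) = x`,
`p_n(x_1,…,x_n) = [p_{n-1}(x_1,…,x_{n-1}), x_n]`. -/
def pn {R : Type*} [NonUnitalNonAssocRing R] : (n : ℕ) → (Fin n → R) → R
  | 0, _ => 0
  | 1, x => x 0
  | (m+2), x =>
      pn (m+1) (fun i => x i.castSucc) * x (Fin.last (m+1))
        - x (Fin.last (m+1)) * pn (m+1) (fun i => x i.castSucc)

/-- A (not necessarily additive) map `D` is a multiplicative Lie `n`-derivation. -/
def IsMultLieNDeriv {R : Type*} [NonUnitalNonAssocRing R] (n : ℕ) (D : R → R) : Prop :=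
  ∀ x : Fin n → R, D (pn n x) = ∑ i : Fin n, pn n (Function.update x i (D (x i)))

/-!
Write `u = a b ∈ P11` and `v = b a ∈ P22`. As `D e` is central, `D` acts as a derivation on
`p_n(s, t, e, …, e) = ad^(n-2) [s, t]` and on `p_n(s, e, …, e, t) = [ad^(n-2) s, t]`, where
`ad = [·, e]` is `-1` on `P12` and the identity on `P21`. With conditions (1)–(3), which make a
diagonal element commuting with `P12` or with `P21` central, this shows that `D` preserves
`P11 ⊕ P22` and is additive on `P21`.

By (a) and (b), `D u - (D a b + a D b)` and `D v - (D b a + b D a)` are central up to defects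
`Δu ∈ P11` and `Δv ∈ P22`. Computing `D ((b a) y + y (a b))` for `y ∈ P21` directly and through
additivity shows that `Δu - Δv` commutes with `P21`, so it is central; computing
`D (b (a b)) = D ((b a) b)` in two ways gives `b Δu = 0`. By (4) a nonzero central element is not
a zero divisor, so `Δu = Δv = 0` or `b = 0`.
-/

section

variable {R : Type*} [NonAssocRing R]

def bracket (x y : R) : R := x * y - y * x

theorem bracket_add_right (x y z : R) : bracket x (y + z) = bracket x y + bracket x z := by
  simp only [bracket, mul_add, add_mul]; abel

theorem bracket_add_left (x y z : R) : bracket (x + y) z = bracket x z + bracket y z := by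
  simp only [bracket, mul_add, add_mul]; abel

theorem bracket_sub_left (x y z : R) : bracket (x - y) z = bracket x z - bracket y z := by
  simp only [bracket, mul_sub, sub_mul]; abel

theorem bracket_sub_right (x y z : R) : bracket x (y - z) = bracket x y - bracket x z := by
  simp only [bracket, mul_sub, sub_mul]; abel

theorem bracket_zsmul_left (k : ℤ) (x y : R) : bracket (k • x) y = k • bracket x y := by
  simp only [bracket, smul_mul_assoc, mul_smul_comm, smul_sub]

theorem bracket_comm (x y : R) : bracket x y = -bracket y x := (neg_sub _ _).symm

theorem bracket_eq_zero_of_mem_rctr {z : R} (hz : z ∈ rctr R) (w : R) : bracket z w = 0 :=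
  sub_eq_zero.mpr (hz w)

theorem bracket_left_eq_of_sub_mem_rctr {x y : R} (h : x - y ∈ rctr R) (w : R) :
    bracket x w = bracket y w := by
  rw [← sub_eq_zero, ← bracket_sub_left, bracket_eq_zero_of_mem_rctr h]

theorem zero_mem_rctr : (0 : R) ∈ rctr R := fun x => by rw [zero_mul, mul_zero]

theorem add_mem_rctr {z w : R} (hz : z ∈ rctr R) (hw : w ∈ rctr R) : z + w ∈ rctr R :=
  fun x => by rw [add_mul, mul_add, hz x, hw x]

theorem sub_mem_rctr {z w : R} (hz : z ∈ rctr R) (hw : w ∈ rctr R) : z - w ∈ rctr R :=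
  fun x => by rw [sub_mul, mul_sub, hz x, hw x]

theorem zsmul_mem_rctr {z : R} (hz : z ∈ rctr R) (k : ℤ) : k • z ∈ rctr R := fun x => by
  rw [smul_mul_assoc, mul_smul_comm, hz x]

theorem neg_one_pow_zsmul_zsmul (m : ℕ) (x : R) : (-1 : ℤ) ^ m • (-1 : ℤ) ^ m • x = x := by
  rw [smul_smul, ← mul_pow, neg_one_mul, neg_neg, one_pow, one_smul]

theorem neg_one_pow_zsmul_injective (m : ℕ) : Function.Injective ((-1 : ℤ) ^ m • · : R → R) :=
  fun x y h => by simpa only [neg_one_pow_zsmul_zsmul] using congrArg ((-1 : ℤ) ^ m • ·) h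

namespace IsAlt

theorem associator_self_left (hR : IsAlt R) (x y : R) : associator x x y = 0 :=
  sub_eq_zero.mpr (hR x y).1

theorem associator_self_right (hR : IsAlt R) (x y : R) : associator y x x = 0 :=
  sub_eq_zero.mpr (hR x y).2

theorem associator_swap_left (hR : IsAlt R) (x y z : R) :
    associator x y z = -associator y x z := by
  have h := hR.associator_self_left (x + y) z
  have hx := hR.associator_self_left x z
  have hy := hR.associator_self_left y z
  simp only [associator, add_mul, mul_add] at h hx hy ⊢
  linear_combination (norm := abel) h - hx - hy

theorem associator_swap_right (hR : IsAlt R) (x y z : R) :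
    associator x y z = -associator x z y := by
  have h := hR.associator_self_right (y + z) x
  have hy := hR.associator_self_right y x
  have hz := hR.associator_self_right z x
  simp only [associator, add_mul, mul_add] at h hy hz ⊢
  linear_combination (norm := abel) h - hy - hz

theorem associator_cyclic (hR : IsAlt R) (x y z : R) :
    associator x y z = associator z x y := by
  rw [hR.associator_swap_right, hR.associator_swap_left, neg_neg]

theorem associator_add_associator_reverse (hR : IsAlt R) (x y z : R) :
    associator x y z + associator z y x = 0 := by
  rw [hR.associator_swap_left, hR.associator_swap_right, hR.associator_swap_left, neg_neg,
    neg_add_cancel]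

theorem flexible (hR : IsAlt R) (x y : R) : x * y * x = x * (y * x) := by
  rw [← sub_eq_zero, ← associator_apply, hR.associator_swap_right,
    hR.associator_self_left, neg_zero]

theorem left_mul_mul (hR : IsAlt R) (a x y : R) :
    a * (x * y) = a * x * y + x * a * y - x * (a * y) := by
  have h := hR.associator_swap_left a x y
  rw [associator, associator] at h
  linear_combination (norm := abel) -h

theorem mul_mul_right (hR : IsAlt R) (x y a : R) :
    x * y * a = x * (y * a) - x * a * y + x * (a * y) := by
  have h := hR.associator_swap_right x y a
  rw [associator, associator] at h
  linear_combination (norm := abel) h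

theorem bracket_mul (hR : IsAlt R) (x y z : R) :
    bracket x (y * z) = bracket x y * z + y * bracket x z - 3 • associator x y z := by
  have h1 := hR.associator_swap_left y x z
  have h2 := hR.associator_cyclic y z x
  simp only [bracket, associator, sub_mul, mul_sub] at h1 h2 ⊢
  linear_combination (norm := abel) h1 - h2

/-- For central `z`, `(s, z, t) - (s, t, z) = (z, s, t)`, while alternativity turns the left side
into `-2 (z, s, t)`. -/
theorem associator_eq_zero_of_mem_rctr (hR : IsAlt R) (h3 : ∀ x : R, 3 • x = 0 → x = 0)
    {z : R} (hz : z ∈ rctr R) (s t : R) : associator z s t = 0 := by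
  have h1 := hR.associator_swap_left s z t
  have h2 := hR.associator_cyclic s t z
  simp only [associator] at h1 h2 ⊢
  rw [← hz s] at h1
  rw [← hz (s * t), ← hz t] at h2
  apply h3
  linear_combination (norm := abel) h1 - h2

theorem mul_rctr_assoc (hR : IsAlt R) (h3 : ∀ x : R, 3 • x = 0 → x = 0)
    {z : R} (hz : z ∈ rctr R) (s t : R) : s * z * t = s * (z * t) := by
  rw [← sub_eq_zero, ← associator_apply, hR.associator_swap_left,
    hR.associator_eq_zero_of_mem_rctr h3 hz, neg_zero]

theorem eq_zero_of_rctr_mul_eq_zero (hR : IsAlt R) (h3 : ∀ x : R, 3 • x = 0 → x = 0)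
    (hc4 : ∀ z ∈ rctr R, z ≠ 0 → ∀ r : R, ∃ s : R, z * s = r) {z t : R} (hz : z ∈ rctr R)
    (hz0 : z ≠ 0) (h : z * t = 0) : t = 0 := by
  obtain ⟨s, hs⟩ := hc4 z hz hz0 1
  calc t = z * s * t := by rw [hs, one_mul]
    _ = s * (z * t) := by rw [hz s, hR.mul_rctr_assoc h3 hz]
    _ = 0 := by rw [h, mul_zero]

end IsAlt

def P11.addSubgroup (e : R) : AddSubgroup R where
  carrier := P11 e
  add_mem' hx hy := ⟨by rw [mul_add, hx.1, hy.1], by rw [add_mul, hx.2, hy.2]⟩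
  zero_mem' := ⟨mul_zero e, zero_mul e⟩
  neg_mem' hx := ⟨by rw [mul_neg, hx.1], by rw [neg_mul, hx.2]⟩

def P12.addSubgroup (e : R) : AddSubgroup R where
  carrier := P12 e
  add_mem' hx hy := ⟨by rw [mul_add, hx.1, hy.1], by rw [add_mul, hx.2, hy.2, add_zero]⟩
  zero_mem' := ⟨mul_zero e, zero_mul e⟩
  neg_mem' hx := ⟨by rw [mul_neg, hx.1], by rw [neg_mul, hx.2, neg_zero]⟩

def P21.addSubgroup (e : R) : AddSubgroup R where
  carrier := P21 e
  add_mem' hx hy := ⟨by rw [mul_add, hx.1, hy.1, add_zero], by rw [add_mul, hx.2, hy.2]⟩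
  zero_mem' := ⟨mul_zero e, zero_mul e⟩
  neg_mem' hx := ⟨by rw [mul_neg, hx.1, neg_zero], by rw [neg_mul, hx.2]⟩

def P22.addSubgroup (e : R) : AddSubgroup R where
  carrier := P22 e
  add_mem' hx hy := ⟨by rw [mul_add, hx.1, hy.1, add_zero], by rw [add_mul, hx.2, hy.2, add_zero]⟩
  zero_mem' := ⟨mul_zero e, zero_mul e⟩
  neg_mem' hx := ⟨by rw [mul_neg, hx.1, neg_zero], by rw [neg_mul, hx.2, neg_zero]⟩

/-- The standing hypotheses under which the Peirce decomposition relative to `e` is graded. -/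
structure AltPeirce (e : R) : Prop where
  alt : IsAlt R
  idem : e * e = e
  two_torsion : ∀ x : R, 2 • x = 0 → x = 0

namespace AltPeirce

variable {e x y w : R}

theorem mem_P11_self (he : AltPeirce e) : e ∈ P11 e := ⟨he.idem, he.idem⟩

theorem one_sub_mem_P22 (he : AltPeirce e) : 1 - e ∈ P22 e :=
  ⟨by rw [mul_sub, mul_one, he.idem, sub_self], by rw [sub_mul, one_mul, he.idem, sub_self]⟩

theorem left_idem (he : AltPeirce e) (w : R) : e * (e * w) = e * w := by
  rw [← (he.alt e w).1, he.idem]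

theorem right_idem (he : AltPeirce e) (w : R) : w * e * e = w * e := by
  rw [(he.alt e w).2, he.idem]

theorem eq_zero_of_left_eq_neg (he : AltPeirce e) (h : e * w = -w) : w = 0 := by
  have h' := he.left_idem w
  rw [h, mul_neg, h, neg_neg] at h'
  exact he.two_torsion w (by linear_combination (norm := abel) h')

theorem eq_zero_of_left_eq_add_self (he : AltPeirce e) (h : e * w = w + w) : w = 0 := by
  have h' := he.left_idem w
  rw [h, mul_add, h] at h'
  exact he.two_torsion w (by linear_combination (norm := abel) h')

theorem eq_zero_of_right_eq_neg (he : AltPeirce e) (h : w * e = -w) : w = 0 := by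
  have h' := he.right_idem w
  rw [h, neg_mul, h, neg_neg] at h'
  exact he.two_torsion w (by linear_combination (norm := abel) h')

theorem eq_zero_of_right_eq_add_self (he : AltPeirce e) (h : w * e = w + w) : w = 0 := by
  have h' := he.right_idem w
  rw [h, add_mul, h] at h'
  exact he.two_torsion w (by linear_combination (norm := abel) h')

/-! For `x ∈ P_ij` and `y ∈ P_kl`, linearized alternativity gives `e (x y) = (i + j - k) x y` and
`(x y) e = (l - j + k) x y`, reading the index `1` as `1` and `2` as `0`. An eigenvalue `-1` or `2`
forces `x y = 0`, since `e` is idempotent and `R` has no 2-torsion. -/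

theorem mul_11_11 (he : AltPeirce e) (hx : x ∈ P11 e) (hy : y ∈ P11 e) : x * y ∈ P11 e := by
  have hl := he.alt.left_mul_mul e x y
  have hr := he.alt.mul_mul_right x y e
  simp only [hx.1, hx.2, hy.1, add_sub_cancel_right, hy.2, sub_self, zero_add] at hl hr
  exact ⟨hl, hr⟩

theorem mul_11_12 (he : AltPeirce e) (hx : x ∈ P11 e) (hy : y ∈ P12 e) : x * y ∈ P12 e := by
  have hl := he.alt.left_mul_mul e x y
  have hr := he.alt.mul_mul_right x y e
  simp only [hx.1, hx.2, hy.1, add_sub_cancel_right, hy.2, mul_zero, zero_sub,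
    neg_add_cancel] at hl hr
  exact ⟨hl, hr⟩

theorem mul_11_21 (he : AltPeirce e) (hx : x ∈ P11 e) (hy : y ∈ P21 e) : x * y = 0 := by
  have h := he.alt.left_mul_mul e x y
  simp only [hx.1, hx.2, hy.1, mul_zero, sub_zero] at h
  exact he.eq_zero_of_left_eq_add_self h

theorem mul_11_22 (he : AltPeirce e) (hx : x ∈ P11 e) (hy : y ∈ P22 e) : x * y = 0 := by
  have h := he.alt.left_mul_mul e x y
  simp only [hx.1, hx.2, hy.1, mul_zero, sub_zero] at h
  exact he.eq_zero_of_left_eq_add_self h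

theorem mul_12_11 (he : AltPeirce e) (hx : x ∈ P12 e) (hy : y ∈ P11 e) : x * y = 0 := by
  have h := he.alt.mul_mul_right x y e
  simp only [hy.2, hx.2, zero_mul, sub_zero, hy.1] at h
  exact he.eq_zero_of_right_eq_add_self h

theorem mul_12_12 (he : AltPeirce e) (hx : x ∈ P12 e) (hy : y ∈ P12 e) : x * y ∈ P21 e := by
  have hl := he.alt.left_mul_mul e x y
  have hr := he.alt.mul_mul_right x y e
  simp only [hx.1, hx.2, zero_mul, add_zero, hy.1, sub_self, hy.2, mul_zero, zero_add] at hl hr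
  exact ⟨hl, hr⟩

theorem mul_12_21 (he : AltPeirce e) (hx : x ∈ P12 e) (hy : y ∈ P21 e) : x * y ∈ P11 e := by
  have hl := he.alt.left_mul_mul e x y
  have hr := he.alt.mul_mul_right x y e
  simp only [hx.1, hx.2, zero_mul, add_zero, hy.1, mul_zero, sub_zero, hy.2] at hl hr
  exact ⟨hl, hr⟩

theorem mul_12_22 (he : AltPeirce e) (hx : x ∈ P12 e) (hy : y ∈ P22 e) : x * y ∈ P12 e := by
  have hl := he.alt.left_mul_mul e x y
  have hr := he.alt.mul_mul_right x y e
  simp only [hx.1, hx.2, zero_mul, add_zero, hy.1, mul_zero, sub_zero, hy.2, sub_self] at hl hr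
  exact ⟨hl, hr⟩

theorem mul_21_11 (he : AltPeirce e) (hx : x ∈ P21 e) (hy : y ∈ P11 e) : x * y ∈ P21 e := by
  have hl := he.alt.left_mul_mul e x y
  have hr := he.alt.mul_mul_right x y e
  simp only [hx.1, zero_mul, hx.2, zero_add, hy.1, sub_self, hy.2] at hl hr
  exact ⟨hl, hr⟩

theorem mul_21_12 (he : AltPeirce e) (hx : x ∈ P21 e) (hy : y ∈ P12 e) : x * y ∈ P22 e := by
  have hl := he.alt.left_mul_mul e x y
  have hr := he.alt.mul_mul_right x y e
  simp only [hx.1, zero_mul, hx.2, zero_add, hy.1, sub_self, hy.2, mul_zero, zero_sub,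
    neg_add_cancel] at hl hr
  exact ⟨hl, hr⟩

theorem mul_21_21 (he : AltPeirce e) (hx : x ∈ P21 e) (hy : y ∈ P21 e) : x * y ∈ P12 e := by
  have hl := he.alt.left_mul_mul e x y
  have hr := he.alt.mul_mul_right x y e
  simp only [hx.1, zero_mul, hx.2, zero_add, hy.1, mul_zero, sub_zero, hy.2, sub_self,
    add_zero] at hl hr
  exact ⟨hl, hr⟩

theorem mul_21_22 (he : AltPeirce e) (hx : x ∈ P21 e) (hy : y ∈ P22 e) : x * y = 0 := by
  have h := he.alt.mul_mul_right x y e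
  simp only [hy.2, mul_zero, hx.2, zero_sub, hy.1, add_zero] at h
  exact he.eq_zero_of_right_eq_neg h

theorem mul_22_11 (he : AltPeirce e) (hx : x ∈ P22 e) (hy : y ∈ P11 e) : x * y = 0 := by
  have h := he.alt.left_mul_mul e x y
  simp only [hx.1, zero_mul, hx.2, add_zero, hy.1, zero_sub] at h
  exact he.eq_zero_of_left_eq_neg h

theorem mul_22_12 (he : AltPeirce e) (hx : x ∈ P22 e) (hy : y ∈ P12 e) : x * y = 0 := by
  have h := he.alt.left_mul_mul e x y
  simp only [hx.1, zero_mul, hx.2, add_zero, hy.1, zero_sub] at h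
  exact he.eq_zero_of_left_eq_neg h

theorem mul_22_21 (he : AltPeirce e) (hx : x ∈ P22 e) (hy : y ∈ P21 e) : x * y ∈ P21 e := by
  have hl := he.alt.left_mul_mul e x y
  have hr := he.alt.mul_mul_right x y e
  simp only [hx.1, zero_mul, hx.2, add_zero, hy.1, mul_zero, sub_self, hy.2, sub_zero] at hl hr
  exact ⟨hl, hr⟩

theorem mul_22_22 (he : AltPeirce e) (hx : x ∈ P22 e) (hy : y ∈ P22 e) : x * y ∈ P22 e := by
  have hl := he.alt.left_mul_mul e x y
  have hr := he.alt.mul_mul_right x y e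
  simp only [hx.1, zero_mul, hx.2, add_zero, hy.1, mul_zero, sub_self, hy.2] at hl hr
  exact ⟨hl, hr⟩

theorem mul_self_P21 (he : AltPeirce e) (hy : y ∈ P21 e) : y * y = 0 := by
  have h := (he.alt y e).1
  rwa [hy.2, (he.mul_21_21 hy hy).2, eq_comm] at h

end AltPeirce

theorem eq_zero_of_add_eq_zero_of_P11_P22 {e a b : R} (ha : a ∈ P11 e) (hb : b ∈ P22 e)
    (h : a + b = 0) : a = 0 ∧ b = 0 := by
  have h1 : e * (a + b) = a := by rw [mul_add, ha.1, hb.1, add_zero]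
  rw [h, mul_zero] at h1
  exact ⟨h1.symm, by rwa [← h1, zero_add] at h⟩

/-! The Peirce projections, written as in hypotheses (a) and (b): `pr_ij e w = (e_i w) e_j`. -/

def pr11 (e : R) : R →+ R := (AddMonoidHom.mulRight e).comp (AddMonoidHom.mulLeft e)
def pr12 (e : R) : R →+ R := (AddMonoidHom.mulRight (1 - e)).comp (AddMonoidHom.mulLeft e)
def pr21 (e : R) : R →+ R := (AddMonoidHom.mulRight e).comp (AddMonoidHom.mulLeft (1 - e))
def pr22 (e : R) : R →+ R :=
  (AddMonoidHom.mulRight (1 - e)).comp (AddMonoidHom.mulLeft (1 - e))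

theorem pr11_apply (e w : R) : pr11 e w = e * w * e := rfl
theorem pr12_apply (e w : R) : pr12 e w = e * w * (1 - e) := rfl
theorem pr21_apply (e w : R) : pr21 e w = (1 - e) * w * e := rfl
theorem pr22_apply (e w : R) : pr22 e w = (1 - e) * w * (1 - e) := rfl

theorem pr_sum (e w : R) : pr11 e w + pr12 e w + pr21 e w + pr22 e w = w := by
  simp only [pr11_apply, pr12_apply, pr21_apply, pr22_apply, sub_mul, mul_sub, one_mul, mul_one]
  abel

theorem bracket_left_eq_pr12_sub_pr21 (e w : R) : bracket e w = pr12 e w - pr21 e w := by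
  simp only [bracket, pr12_apply, pr21_apply, sub_mul, mul_sub, one_mul, mul_one]
  abel

/-- The centralizer of `e`, which is the diagonal part `P11 e ⊕ P22 e` of the Peirce
decomposition (`mem_peirceDiag_iff_pr`). -/
def peirceDiag (e : R) : AddSubgroup R := (AddMonoidHom.mulLeft e - AddMonoidHom.mulRight e).ker

theorem mem_peirceDiag {e w : R} : w ∈ peirceDiag e ↔ e * w = w * e := sub_eq_zero

section

variable {e a b w : R}

theorem pr12_of_P12 (hw : w ∈ P12 e) : pr12 e w = w := by
  rw [pr12_apply, mul_sub, mul_one, hw.1, hw.2, sub_zero]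

theorem pr21_of_P12 (hw : w ∈ P12 e) : pr21 e w = 0 := by
  rw [pr21_apply, sub_mul, one_mul, hw.1, sub_self, zero_mul]

theorem pr12_of_P21 (hw : w ∈ P21 e) : pr12 e w = 0 := by
  rw [pr12_apply, hw.1, zero_mul]

theorem pr21_of_P21 (hw : w ∈ P21 e) : pr21 e w = w := by
  rw [pr21_apply, sub_mul, one_mul, hw.1, sub_zero, hw.2]

theorem pr12_zsmul_sub (k : ℤ) (ha : a ∈ P12 e) (hb : b ∈ P21 e) :
    pr12 e (k • a - b) = k • a := by
  rw [map_sub, map_zsmul, pr12_of_P12 ha, pr12_of_P21 hb, sub_zero]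

theorem pr21_zsmul_sub (k : ℤ) (ha : a ∈ P12 e) (hb : b ∈ P21 e) :
    pr21 e (k • a - b) = -b := by
  rw [map_sub, map_zsmul, pr21_of_P12 ha, pr21_of_P21 hb, smul_zero, zero_sub]

theorem mem_peirceDiag_of_P11 (hw : w ∈ P11 e) : w ∈ peirceDiag e :=
  mem_peirceDiag.mpr (hw.1.trans hw.2.symm)

theorem mem_peirceDiag_of_P22 (hw : w ∈ P22 e) : w ∈ peirceDiag e :=
  mem_peirceDiag.mpr (hw.1.trans hw.2.symm)

theorem mem_peirceDiag_of_mem_rctr (hw : w ∈ rctr R) : w ∈ peirceDiag e :=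
  mem_peirceDiag.mpr (hw e).symm

theorem bracket_P21_e {y : R} (hy : y ∈ P21 e) : bracket y e = y := by
  rw [bracket, hy.2, hy.1, sub_zero]

theorem bracket_one_sub_P21 {y : R} (hy : y ∈ P21 e) : bracket (1 - e) y = y := by
  rw [bracket, sub_mul, mul_sub, one_mul, mul_one, hy.1, hy.2, sub_zero, sub_self, sub_zero]

end

namespace AltPeirce

variable {e c d w x y z z₁ z₂ : R}

theorem pr11_mem (he : AltPeirce e) (w : R) : pr11 e w ∈ P11 e := by
  constructor <;>
  simp only [pr11_apply, ← he.alt.flexible, he.left_idem, he.right_idem]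

theorem pr12_mem (he : AltPeirce e) (w : R) : pr12 e w ∈ P12 e := by
  constructor <;>
  simp only [pr12_apply, mul_sub, sub_mul, mul_one, ← he.alt.flexible, he.left_idem,
    he.right_idem, sub_self]

theorem pr21_mem (he : AltPeirce e) (w : R) : pr21 e w ∈ P21 e := by
  constructor <;>
  simp only [pr21_apply, mul_sub, sub_mul, one_mul, ← he.alt.flexible, he.left_idem,
    he.right_idem, sub_self]

theorem pr22_mem (he : AltPeirce e) (w : R) : pr22 e w ∈ P22 e := by
  constructor <;>
  simp only [pr22_apply, mul_sub, sub_mul, one_mul, mul_one, ← he.alt.flexible,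
    he.left_idem, he.right_idem, sub_self]

theorem mem_peirceDiag_iff_pr (he : AltPeirce e) :
    w ∈ peirceDiag e ↔ pr12 e w = 0 ∧ pr21 e w = 0 := by
  rw [mem_peirceDiag, ← sub_eq_zero, ← bracket, bracket_left_eq_pr12_sub_pr21]
  refine ⟨fun h => ?_, fun h => by rw [h.1, h.2, sub_zero]⟩
  have h12 : pr12 e w = 0 := calc
    pr12 e w = e * (pr12 e w - pr21 e w) := by
      rw [mul_sub, (he.pr12_mem w).1, (he.pr21_mem w).1, sub_zero]
    _ = 0 := by rw [h, mul_zero]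
  exact ⟨h12, by rwa [h12, zero_sub, neg_eq_zero] at h⟩

theorem eq_pr11_add_pr22 (he : AltPeirce e) (hw : w ∈ peirceDiag e) :
    w = pr11 e w + pr22 e w := by
  have h := pr_sum e w
  rw [((mem_peirceDiag_iff_pr he).mp hw).1, ((mem_peirceDiag_iff_pr he).mp hw).2, add_zero,
    add_zero] at h
  exact h.symm

theorem pr11_of_mem_rctr (he : AltPeirce e) (hz : z ∈ rctr R) : pr11 e z = z * e := by
  rw [pr11_apply, ← hz e, (he.alt e z).2, he.idem]

theorem pr22_of_mem_rctr (he : AltPeirce e) (hz : z ∈ rctr R) : pr22 e z = z * (1 - e) := by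
  have h : (1 - e) * (1 - e) = 1 - e := by rw [mul_sub, mul_one, he.one_sub_mem_P22.2, sub_zero]
  rw [pr22_apply, ← hz (1 - e), (he.alt (1 - e) z).2, h]

theorem sub_sub_mem_P11 (he : AltPeirce e) (hw : w ∈ peirceDiag e) (hc : c ∈ P11 e)
    (hz : z ∈ rctr R) (h : pr22 e w = z * (1 - e)) : w - c - z ∈ P11 e := by
  have hd : w - c - z ∈ peirceDiag e := (peirceDiag e).sub_mem ((peirceDiag e).sub_mem hw
    (mem_peirceDiag_of_P11 hc)) (mem_peirceDiag_of_mem_rctr hz)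
  have h22 : pr22 e (w - c - z) = 0 := by
    rw [map_sub, map_sub, h, he.pr22_of_mem_rctr hz, pr22_apply, sub_mul, one_mul, hc.1, sub_self,
      zero_mul, sub_zero, sub_self]
  rw [he.eq_pr11_add_pr22 hd, h22, add_zero]
  exact he.pr11_mem _

theorem sub_sub_mem_P22 (he : AltPeirce e) (hw : w ∈ peirceDiag e) (hc : c ∈ P22 e)
    (hz : z ∈ rctr R) (h : pr11 e w = z * e) : w - c - z ∈ P22 e := by
  have hd : w - c - z ∈ peirceDiag e := (peirceDiag e).sub_mem ((peirceDiag e).sub_mem hw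
    (mem_peirceDiag_of_P22 hc)) (mem_peirceDiag_of_mem_rctr hz)
  have h11 : pr11 e (w - c - z) = 0 := by
    rw [map_sub, map_sub, h, he.pr11_of_mem_rctr hz, pr11_apply, hc.1, zero_mul, sub_zero,
      sub_self]
  rw [he.eq_pr11_add_pr22 hd, h11, zero_add]
  exact he.pr22_mem _

theorem bracket_P12_peirceDiag (he : AltPeirce e) (hx : x ∈ P12 e) (hd : d ∈ peirceDiag e) :
    bracket x d ∈ P12 e := by
  rw [he.eq_pr11_add_pr22 hd, bracket, mul_add, add_mul, he.mul_12_11 hx (he.pr11_mem d),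
    he.mul_22_12 (he.pr22_mem d) hx, zero_add, add_zero]
  exact (P12.addSubgroup e).sub_mem (he.mul_12_22 hx (he.pr22_mem d))
    (he.mul_11_12 (he.pr11_mem d) hx)

theorem bracket_P12_P21 (he : AltPeirce e) (hx : x ∈ P12 e) (hy : y ∈ P21 e) :
    bracket x y ∈ peirceDiag e :=
  (peirceDiag e).sub_mem (mem_peirceDiag_of_P11 (he.mul_12_21 hx hy))
    (mem_peirceDiag_of_P22 (he.mul_21_12 hy hx))

theorem bracket_P12_P12 (he : AltPeirce e) (hx : x ∈ P12 e) (hy : y ∈ P12 e) :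
    bracket x y ∈ P21 e :=
  (P21.addSubgroup e).sub_mem (he.mul_12_12 hx hy) (he.mul_12_12 hy hx)

theorem bracket_P21_P21 (he : AltPeirce e) (hx : x ∈ P21 e) (hy : y ∈ P21 e) :
    bracket x y ∈ P12 e :=
  (P12.addSubgroup e).sub_mem (he.mul_21_21 hx hy) (he.mul_21_21 hy hx)

/-- A central element has no off-diagonal Peirce components. -/
theorem mem_rctr_of_add_P21_P12 (he : AltPeirce e) {a b : R} (ha : a ∈ P21 e) (hb : b ∈ P12 e)
    (hd : d ∈ peirceDiag e) (hc : a + b + d ∈ rctr R) : d ∈ rctr R := by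
  have hcd := (he.mem_peirceDiag_iff_pr).mp (mem_peirceDiag_of_mem_rctr hc)
  have hd' := (he.mem_peirceDiag_iff_pr).mp hd
  simp only [map_add, pr12_of_P21 ha, pr12_of_P12 hb, pr21_of_P21 ha, pr21_of_P12 hb, hd'.1,
    hd'.2, add_zero, zero_add] at hcd
  rwa [hcd.1, hcd.2, add_zero, zero_add] at hc

theorem mul_eq_zero_of_bracket_mem_rctr (he : AltPeirce e) (h3 : ∀ x : R, 3 • x = 0 → x = 0)
    (hc4 : ∀ z ∈ rctr R, z ≠ 0 → ∀ r : R, ∃ s : R, z * s = r) (hx : x ∈ P12 e)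
    (hy : y ∈ P21 e) (hc : bracket x y ∈ rctr R) : x * y = 0 ∧ y * x = 0 := by
  -- `[x, y] y = -(y x y) = -(y [x, y])`, so `[x, y]` is a central zero divisor
  have hyy := he.mul_self_P21 hy
  have hright : bracket x y * y = -(y * x * y) := by
    rw [bracket, sub_mul, (he.alt y x).2, hyy, mul_zero, zero_sub]
  have hleft : y * bracket x y = y * x * y := by
    rw [bracket, mul_sub, ← (he.alt y x).1, hyy, zero_mul, sub_zero, he.alt.flexible]
  have hyxy : y * x * y = 0 := he.two_torsion _ <| by
    rw [two_nsmul]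
    nth_rewrite 1 [← hleft]
    rw [← hc y, hright, neg_add_cancel]
  have hsplit : bracket x y = 0 → x * y = 0 ∧ y * x = 0 := fun h => by
    have h' := eq_zero_of_add_eq_zero_of_P11_P22 (he.mul_12_21 hx hy)
      ((P22.addSubgroup e).neg_mem (he.mul_21_12 hy hx)) (by rwa [← sub_eq_add_neg])
    exact ⟨h'.1, neg_eq_zero.mp h'.2⟩
  by_cases h0 : bracket x y = 0
  · exact hsplit h0
  · have hy0 := he.alt.eq_zero_of_rctr_mul_eq_zero h3 hc4 hc h0 (by rw [hright, hyxy, neg_zero])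
    exact hsplit (by rw [hy0, bracket, mul_zero, zero_mul, sub_zero])

theorem eq_zero_or_eq_zero_of_sub_mem_rctr (he : AltPeirce e)
    (h3 : ∀ x : R, 3 • x = 0 → x = 0)
    (hc4 : ∀ z ∈ rctr R, z ≠ 0 → ∀ r : R, ∃ s : R, z * s = r) {u v b : R} (hu : u ∈ P11 e)
    (hv : v ∈ P22 e) (hc : u - v ∈ rctr R) (hb : b ∈ P21 e) (hbu : b * u = 0) :
    (u = 0 ∧ v = 0) ∨ b = 0 := by
  by_cases h0 : u - v = 0
  · obtain ⟨hu0, hv0⟩ := eq_zero_of_add_eq_zero_of_P11_P22 hu ((P22.addSubgroup e).neg_mem hv)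
      (by rwa [← sub_eq_add_neg])
    exact Or.inl ⟨hu0, neg_eq_zero.mp hv0⟩
  · refine Or.inr (he.alt.eq_zero_of_rctr_mul_eq_zero h3 hc4 hc h0 ?_)
    rw [hc b, mul_sub, hbu, he.mul_21_22 hb hv, sub_zero]

theorem mem_rctr_of_bracket_Pij (he : AltPeirce e)
    (h11 : ∀ w ∈ P11 e, bracket z w = 0) (h12 : ∀ w ∈ P12 e, bracket z w = 0)
    (h21 : ∀ w ∈ P21 e, bracket z w = 0) (h22 : ∀ w ∈ P22 e, bracket z w = 0) :
    z ∈ rctr R := by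
  intro r
  have h : bracket z (pr11 e r + pr12 e r + pr21 e r + pr22 e r) = 0 := by
    rw [bracket_add_right, bracket_add_right, bracket_add_right, h11 _ (he.pr11_mem r),
      h12 _ (he.pr12_mem r), h21 _ (he.pr21_mem r), h22 _ (he.pr22_mem r)]
    simp only [add_zero]
  rwa [pr_sum, bracket, sub_eq_zero] at h

theorem bracket_P11_eq_zero_of_bracket_P21 (he : AltPeirce e)
    (h11 : ∀ x ∈ P11 e, (∀ y ∈ P21 e, y * x = 0) → x = 0)
    (hz₁ : z₁ ∈ P11 e) (hz₂ : z₂ ∈ P22 e)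
    (hcomm : ∀ y ∈ P21 e, bracket (z₁ + z₂) y = 0) {m : R} (hm : m ∈ P11 e) :
    bracket (z₁ + z₂) m = 0 := by
  have hmem : bracket (z₁ + z₂) m ∈ P11 e := by
    rw [bracket, add_mul, mul_add, he.mul_22_11 hz₂ hm, he.mul_11_22 hm hz₂, add_zero, add_zero]
    exact (P11.addSubgroup e).sub_mem (he.mul_11_11 hz₁ hm) (he.mul_11_11 hm hz₁)
  refine h11 _ hmem fun y hy => ?_
  have hA : associator (z₁ + z₂) y m = 0 := by
    rw [he.alt.associator_cyclic]
    simp only [associator, add_mul, mul_add, he.mul_11_21, he.mul_11_11, he.mul_22_21,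
      he.mul_11_22, hz₁, hz₂, hm, hy, zero_add, add_zero, sub_self]
  have h := he.alt.bracket_mul (z₁ + z₂) y m
  rwa [hcomm _ (he.mul_21_11 hy hm), hcomm y hy, hA, zero_mul, zero_add, smul_zero, sub_zero,
    eq_comm] at h

theorem bracket_P22_eq_zero_of_bracket_P21 (he : AltPeirce e)
    (h22 : ∀ x ∈ P22 e, (∀ y ∈ P21 e, x * y = 0) → x = 0)
    (hz₁ : z₁ ∈ P11 e) (hz₂ : z₂ ∈ P22 e)
    (hcomm : ∀ y ∈ P21 e, bracket (z₁ + z₂) y = 0) {m : R} (hm : m ∈ P22 e) :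
    bracket (z₁ + z₂) m = 0 := by
  have hmem : bracket (z₁ + z₂) m ∈ P22 e := by
    rw [bracket, add_mul, mul_add, he.mul_11_22 hz₁ hm, he.mul_22_11 hm hz₁, zero_add, zero_add]
    exact (P22.addSubgroup e).sub_mem (he.mul_22_22 hz₂ hm) (he.mul_22_22 hm hz₂)
  refine h22 _ hmem fun y hy => ?_
  have hA : associator (z₁ + z₂) m y = 0 := by
    rw [he.alt.associator_cyclic]
    simp only [associator, add_mul, mul_add, he.mul_21_22, he.mul_21_11, he.mul_22_22,
      he.mul_11_22, hz₁, hz₂, hm, hy, zero_add, add_zero, sub_self]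
  have h := he.alt.bracket_mul (z₁ + z₂) m y
  rwa [hcomm _ (he.mul_22_21 hm hy), hcomm y hy, hA, mul_zero, add_zero, smul_zero, sub_zero,
    eq_comm] at h

theorem bracket_P12_eq_zero_of_bracket_P21 (he : AltPeirce e)
    (h11 : ∀ x ∈ P11 e, (∀ y ∈ P21 e, y * x = 0) → x = 0)
    (h12 : ∀ x ∈ P12 e, (∀ y ∈ P21 e, x * y = 0 ∧ y * x = 0) → x = 0)
    (h22 : ∀ x ∈ P22 e, (∀ y ∈ P21 e, x * y = 0) → x = 0)
    (hz₁ : z₁ ∈ P11 e) (hz₂ : z₂ ∈ P22 e)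
    (hcomm : ∀ y ∈ P21 e, bracket (z₁ + z₂) y = 0) {x : R} (hx : x ∈ P12 e) :
    bracket (z₁ + z₂) x = 0 := by
  have hmem : bracket (z₁ + z₂) x ∈ P12 e := by
    rw [bracket, add_mul, mul_add, he.mul_22_12 hz₂ hx, he.mul_12_11 hx hz₁, add_zero, zero_add]
    exact (P12.addSubgroup e).sub_mem (he.mul_11_12 hz₁ hx) (he.mul_12_22 hx hz₂)
  refine h12 _ hmem fun y hy => ?_
  -- both products are `3 (z, x, y)` up to sign, and they lie in `P11` and `P22` respectively
  have h1 := he.alt.bracket_mul (z₁ + z₂) x y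
  rw [he.bracket_P11_eq_zero_of_bracket_P21 h11 hz₁ hz₂ hcomm (he.mul_12_21 hx hy), hcomm y hy,
    mul_zero, add_zero, eq_comm, sub_eq_zero] at h1
  have h2 := he.alt.bracket_mul (z₁ + z₂) y x
  rw [he.bracket_P22_eq_zero_of_bracket_P21 h22 hz₁ hz₂ hcomm (he.mul_21_12 hy hx), hcomm y hy,
    zero_mul, zero_add, eq_comm, sub_eq_zero, he.alt.associator_swap_right, smul_neg] at h2
  have hsum : bracket (z₁ + z₂) x * y + y * bracket (z₁ + z₂) x = 0 := by
    rw [h1, h2, add_neg_cancel]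
  exact eq_zero_of_add_eq_zero_of_P11_P22 (he.mul_12_21 hmem hy) (he.mul_21_12 hy hmem) hsum

theorem mem_rctr_of_bracket_P21 (he : AltPeirce e)
    (h11 : ∀ x ∈ P11 e, (∀ y ∈ P21 e, y * x = 0) → x = 0)
    (h12 : ∀ x ∈ P12 e, (∀ y ∈ P21 e, x * y = 0 ∧ y * x = 0) → x = 0)
    (h22 : ∀ x ∈ P22 e, (∀ y ∈ P21 e, x * y = 0) → x = 0) (hz : z ∈ peirceDiag e)
    (hcomm : ∀ y ∈ P21 e, bracket z y = 0) : z ∈ rctr R := by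
  rw [he.eq_pr11_add_pr22 hz] at hcomm ⊢
  have h1 := he.pr11_mem z
  have h2 := he.pr22_mem z
  exact he.mem_rctr_of_bracket_Pij
    (fun _ => he.bracket_P11_eq_zero_of_bracket_P21 h11 h1 h2 hcomm)
    (fun _ => he.bracket_P12_eq_zero_of_bracket_P21 h11 h12 h22 h1 h2 hcomm) hcomm
    (fun _ => he.bracket_P22_eq_zero_of_bracket_P21 h22 h1 h2 hcomm)

end AltPeirce

/-! The mirror image of `mem_rctr_of_bracket_P21`, obtained in the opposite ring, where the roles
of `P12` and `P21` are exchanged. -/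

section Opposite

open MulOpposite

variable {e : R}

theorem IsAlt.op (hR : IsAlt R) : IsAlt Rᵐᵒᵖ := fun x y =>
  ⟨congrArg MulOpposite.op (hR (unop x) (unop y)).2.symm,
    congrArg MulOpposite.op (hR (unop x) (unop y)).1.symm⟩

theorem AltPeirce.op (he : AltPeirce e) : AltPeirce (op e) where
  alt := he.alt.op
  idem := congrArg MulOpposite.op he.idem
  two_torsion x hx := unop_injective (he.two_torsion _ (by rw [← unop_smul, hx, unop_zero]))

theorem mem_P11_op {x : Rᵐᵒᵖ} : x ∈ P11 (op e) ↔ unop x ∈ P11 e := by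
  simp only [P11, Set.mem_ofPred_eq, ← unop_inj, unop_mul, unop_op, and_comm]

theorem mem_P12_op {x : Rᵐᵒᵖ} : x ∈ P12 (op e) ↔ unop x ∈ P21 e := by
  simp only [P12, P21, Set.mem_ofPred_eq, ← unop_inj, unop_mul, unop_op, unop_zero, and_comm]

theorem mem_P21_op {x : Rᵐᵒᵖ} : x ∈ P21 (op e) ↔ unop x ∈ P12 e := by
  simp only [P12, P21, Set.mem_ofPred_eq, ← unop_inj, unop_mul, unop_op, unop_zero, and_comm]

theorem mem_P22_op {x : Rᵐᵒᵖ} : x ∈ P22 (op e) ↔ unop x ∈ P22 e := by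
  simp only [P22, Set.mem_ofPred_eq, ← unop_inj, unop_mul, unop_op, unop_zero, and_comm]

theorem op_mem_peirceDiag {z : R} : op z ∈ peirceDiag (op e) ↔ z ∈ peirceDiag e := by
  rw [mem_peirceDiag, mem_peirceDiag, ← op_mul, ← op_mul, op_inj, eq_comm]

theorem op_mem_rctr {z : R} : op z ∈ rctr Rᵐᵒᵖ ↔ z ∈ rctr R :=
  ⟨fun h x => op_injective (h (op x)).symm, fun h x => unop_injective (h (unop x)).symm⟩

theorem bracket_op (x y : R) : bracket (op x) (op y) = -op (bracket x y) := by
  rw [bracket, bracket, ← op_mul, ← op_mul, ← op_sub, ← op_neg, neg_sub]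

theorem AltPeirce.mem_rctr_of_bracket_P12 (he : AltPeirce e)
    (h11 : ∀ x ∈ P11 e, (∀ y ∈ P12 e, x * y = 0) → x = 0)
    (h21 : ∀ x ∈ P21 e, (∀ y ∈ P12 e, x * y = 0 ∧ y * x = 0) → x = 0)
    (h22 : ∀ x ∈ P22 e, (∀ y ∈ P12 e, y * x = 0) → x = 0) {z : R}
    (hz : z ∈ peirceDiag e) (hcomm : ∀ x ∈ P12 e, bracket z x = 0) : z ∈ rctr R := by
  refine op_mem_rctr.mp <| he.op.mem_rctr_of_bracket_P21 ?_ ?_ ?_ (op_mem_peirceDiag.mpr hz)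
    fun y hy => ?_
  · exact fun x hx h => unop_injective <| h11 _ (mem_P11_op.mp hx) fun y hy =>
      op_injective (h (MulOpposite.op y) (mem_P21_op.mpr hy))
  · exact fun x hx h => unop_injective <| h21 _ (mem_P12_op.mp hx) fun y hy =>
      have h' := h (MulOpposite.op y) (mem_P21_op.mpr hy)
      ⟨op_injective h'.2, op_injective h'.1⟩
  · exact fun x hx h => unop_injective <| h22 _ (mem_P22_op.mp hx) fun y hy =>
      op_injective (h (MulOpposite.op y) (mem_P21_op.mpr hy))
  · rw [← op_unop y, bracket_op, hcomm _ (mem_P21_op.mp hy), op_zero, neg_zero]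

end Opposite

/-- Conditions (1)–(3); each field is named after the product assumed to vanish. -/
structure PeirceNondeg (e : R) : Prop where
  P12_mul_P21 : ∀ x ∈ P12 e, (∀ y ∈ P21 e, x * y = 0) → x = 0
  P21_mul_P12 : ∀ x ∈ P21 e, (∀ y ∈ P12 e, x * y = 0) → x = 0
  P11_mul_P12 : ∀ x ∈ P11 e, (∀ y ∈ P12 e, x * y = 0) → x = 0
  P21_mul_P11 : ∀ x ∈ P11 e, (∀ y ∈ P21 e, y * x = 0) → x = 0
  P12_mul_P22 : ∀ x ∈ P22 e, (∀ y ∈ P12 e, y * x = 0) → x = 0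
  P22_mul_P21 : ∀ x ∈ P22 e, (∀ y ∈ P21 e, x * y = 0) → x = 0

namespace PeirceNondeg

variable {e z : R}

theorem mem_rctr_of_bracket_P21 (hN : PeirceNondeg e) (he : AltPeirce e)
    (hz : z ∈ peirceDiag e) (hcomm : ∀ y ∈ P21 e, bracket z y = 0) : z ∈ rctr R :=
  he.mem_rctr_of_bracket_P21 hN.P21_mul_P11
    (fun x hx h => hN.P12_mul_P21 x hx fun y hy => (h y hy).1) hN.P22_mul_P21 hz hcomm

theorem mem_rctr_of_bracket_P12 (hN : PeirceNondeg e) (he : AltPeirce e)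
    (hz : z ∈ peirceDiag e) (hcomm : ∀ x ∈ P12 e, bracket z x = 0) : z ∈ rctr R :=
  he.mem_rctr_of_bracket_P12 hN.P11_mul_P12
    (fun x hx h => hN.P21_mul_P12 x hx fun y hy => (h y hy).1) hN.P12_mul_P22 hz hcomm

end PeirceNondeg

theorem pn_succ_succ (m : ℕ) (x : Fin (m + 2) → R) :
    pn (m + 2) x = bracket (pn (m + 1) fun i => x i.castSucc) (x (Fin.last (m + 1))) := rfl

theorem pn_eq_zero_of_mem_rctr {k : ℕ} (x : Fin (k + 1) → R) {i : Fin (k + 1)} (hi : i ≠ 0)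
    (hx : x i ∈ rctr R) : pn (k + 1) x = 0 := by
  induction k with
  | zero => exact absurd (Fin.ext (Nat.lt_one_iff.mp i.isLt)) hi
  | succ k ih =>
    rw [pn_succ_succ]
    by_cases hl : i = Fin.last (k + 1)
    · subst hl
      rw [bracket, hx, sub_self]
    · obtain ⟨i, rfl⟩ := Fin.exists_castSucc_eq.mpr hl
      rw [ih (fun j => x j.castSucc) (i := i) (by rintro rfl; exact hi rfl) hx, bracket,
        zero_mul, mul_zero, sub_zero]

theorem IsMultLieNDeriv.map_pn_eq_add {k : ℕ} {D : R → R} (hD : IsMultLieNDeriv (k + 1) D)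
    (x : Fin (k + 1) → R) {i j : Fin (k + 1)} (hij : i ≠ j)
    (hrest : ∀ l, l ≠ i → l ≠ j → l ≠ 0 ∧ D (x l) ∈ rctr R) :
    D (pn (k + 1) x) = pn (k + 1) (Function.update x i (D (x i)))
      + pn (k + 1) (Function.update x j (D (x j))) := by
  rw [hD x, Fintype.sum_eq_add i j hij]
  intro l ⟨hli, hlj⟩
  obtain ⟨hl0, hlc⟩ := hrest l hli hlj
  exact pn_eq_zero_of_mem_rctr _ hl0 (by rwa [Function.update_self])

def adRight (e : R) : AddMonoid.End R := AddMonoidHom.mulRight e - AddMonoidHom.mulLeft e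

theorem adRight_pow_succ_apply (e w : R) (j : ℕ) :
    (adRight e ^ (j + 1)) w = bracket ((adRight e ^ j) w) e := by
  rw [pow_succ']
  rfl

def frontTuple {α : Type*} (e s t : α) (m : ℕ) : Fin (m + 2) → α :=
  fun i => if i.val = 0 then s else if i.val = 1 then t else e

def headTuple {α : Type*} (e s : α) (m : ℕ) : Fin (m + 1) → α :=
  fun i => if i.val = 0 then s else e

def endsTuple {α : Type*} (e s t : α) (m : ℕ) : Fin (m + 2) → α :=
  fun i => if i.val = 0 then s else if i.val = m + 1 then t else e

theorem pn_frontTuple (e s t : R) (m : ℕ) :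
    pn (m + 2) (frontTuple e s t m) = (adRight e ^ m) (bracket s t) := by
  induction m with
  | zero => rfl
  | succ m ih =>
    rw [pn_succ_succ, adRight_pow_succ_apply, ← ih]
    rfl

theorem pn_headTuple (e s : R) (m : ℕ) : pn (m + 1) (headTuple e s m) = (adRight e ^ m) s := by
  induction m with
  | zero => rfl
  | succ m ih =>
    rw [pn_succ_succ, adRight_pow_succ_apply, ← ih]
    rfl

theorem pn_endsTuple (e s t : R) (m : ℕ) :
    pn (m + 2) (endsTuple e s t m) = bracket ((adRight e ^ m) s) t := by
  rw [pn_succ_succ, ← pn_headTuple]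
  congr 1
  · congr 1
    funext i
    simp [endsTuple, headTuple, Nat.ne_of_lt i.isLt]
  · simp [endsTuple]

theorem update_frontTuple_zero {α : Type*} (e s t c : α) (m : ℕ) :
    Function.update (frontTuple e s t m) 0 c = frontTuple e c t m := by
  funext i
  by_cases hi : i = 0
  · subst hi; simp [frontTuple]
  · simp [frontTuple, hi]

theorem update_frontTuple_one {α : Type*} (e s t c : α) (m : ℕ) :
    Function.update (frontTuple e s t m) 1 c = frontTuple e s c m := by
  funext i
  by_cases hi : i = 1
  · subst hi; simp [frontTuple]
  · have : i.val ≠ 1 := fun h => hi (Fin.ext (by simp [h]))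
    simp [frontTuple, hi, this]

theorem update_endsTuple_zero {α : Type*} (e s t c : α) (m : ℕ) :
    Function.update (endsTuple e s t m) 0 c = endsTuple e c t m := by
  funext i
  by_cases hi : i = 0
  · subst hi; simp [endsTuple]
  · simp [endsTuple, hi]

theorem update_endsTuple_last {α : Type*} (e s t c : α) (m : ℕ) :
    Function.update (endsTuple e s t m) (Fin.last (m + 1)) c = endsTuple e s c m := by
  funext i
  by_cases hi : i = Fin.last (m + 1)
  · subst hi; simp [endsTuple]
  · have : i.val ≠ m + 1 := fun h => hi (Fin.ext h)
    simp [endsTuple, hi, this]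

namespace IsMultLieNDeriv

variable {m : ℕ} {D : R → R} {e : R}

theorem map_adRight_pow_bracket (hD : IsMultLieNDeriv (m + 2) D) (hDe : D e ∈ rctr R)
    (s t : R) : D ((adRight e ^ m) (bracket s t)) =
      (adRight e ^ m) (bracket (D s) t) + (adRight e ^ m) (bracket s (D t)) := by
  have h := hD.map_pn_eq_add (frontTuple e s t m) (i := 0) (j := 1) (by simp)
    fun l hl0 hl1 => ⟨hl0, by
      have h1 : l.val ≠ 1 := fun h => hl1 (Fin.ext (by simp [h]))
      simpa [frontTuple, hl0, h1] using hDe⟩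
  simpa only [pn_frontTuple, update_frontTuple_zero, update_frontTuple_one, frontTuple,
    Fin.val_zero, Fin.val_one, if_true, if_neg one_ne_zero] using h

theorem map_bracket_adRight_pow (hD : IsMultLieNDeriv (m + 2) D) (hDe : D e ∈ rctr R)
    (s t : R) : D (bracket ((adRight e ^ m) s) t) =
      bracket ((adRight e ^ m) (D s)) t + bracket ((adRight e ^ m) s) (D t) := by
  have h := hD.map_pn_eq_add (endsTuple e s t m) (i := 0) (j := Fin.last (m + 1))
    (by simp [Fin.ext_iff]) fun l hl0 hll => ⟨hl0, by
      have h1 : l.val ≠ m + 1 := fun h => hll (Fin.ext h)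
      simpa [endsTuple, hl0, h1] using hDe⟩
  simpa only [pn_endsTuple, update_endsTuple_zero, update_endsTuple_last, endsTuple,
    Fin.val_zero, Fin.val_last, if_true, if_neg (Nat.succ_ne_zero m)] using h

theorem map_zero (hD : IsMultLieNDeriv (m + 2) D) (hDe : D e ∈ rctr R) : D 0 = 0 := by
  simpa [bracket] using hD.map_adRight_pow_bracket hDe 0 0

end IsMultLieNDeriv

theorem adRight_pow_P21 {e y : R} (hy : y ∈ P21 e) (j : ℕ) : (adRight e ^ j) y = y := by
  induction j with
  | zero => rfl
  | succ j ih => rw [adRight_pow_succ_apply, ih, bracket, hy.2, hy.1, sub_zero]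

theorem adRight_pow_P12 {e x : R} (hx : x ∈ P12 e) (j : ℕ) :
    (adRight e ^ j) x = (-1 : ℤ) ^ j • x := by
  induction j with
  | zero => rw [pow_zero, pow_zero, one_smul]; rfl
  | succ j ih =>
    rw [adRight_pow_succ_apply, ih, bracket_zsmul_left, bracket, hx.1, hx.2, zero_sub, pow_succ,
      mul_smul, neg_one_smul, smul_neg]

/-- Hypothesis (c) together with `D e ∈ Z(R)`, for a multiplicative Lie `(m + 2)`-derivation. -/
structure PeirceLieDeriv (e : R) (m : ℕ) (D : R → R) : Prop where
  lie : IsMultLieNDeriv (m + 2) D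
  map_idem : D e ∈ rctr R
  map_P12 : ∀ a ∈ P12 e, D a ∈ P12 e
  map_P21 : ∀ a ∈ P21 e, D a ∈ P21 e

namespace PeirceLieDeriv

variable {e : R} {m : ℕ} {D : R → R}

theorem map_zero (hD : PeirceLieDeriv e m D) : D 0 = 0 := hD.lie.map_zero hD.map_idem

theorem map_bracket_P21 (hD : PeirceLieDeriv e m D) {q : R} (hq : q ∈ P21 e) (t : R) :
    D (bracket q t) = bracket (D q) t + bracket q (D t) := by
  simpa only [adRight_pow_P21 hq, adRight_pow_P21 (hD.map_P21 q hq)] using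
    hD.lie.map_bracket_adRight_pow hD.map_idem q t

theorem map_zsmul_bracket_P12 (hD : PeirceLieDeriv e m D) {x : R} (hx : x ∈ P12 e) (t : R) :
    D ((-1 : ℤ) ^ m • bracket x t) = (-1 : ℤ) ^ m • (bracket (D x) t + bracket x (D t)) := by
  have h := hD.lie.map_bracket_adRight_pow hD.map_idem x t
  rwa [adRight_pow_P12 hx, adRight_pow_P12 (hD.map_P12 x hx), bracket_zsmul_left,
    bracket_zsmul_left, bracket_zsmul_left, ← smul_add] at h

/-- `[e, w] = pr12 w - pr21 w`, and `[·, e]` acts by `-1` on `P12` and trivially on `P21`. -/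
theorem map_zsmul_pr12_sub_pr21 (hD : PeirceLieDeriv e m D) (he : AltPeirce e) (w : R) :
    D ((-1 : ℤ) ^ m • pr12 e w - pr21 e w) = (-1 : ℤ) ^ m • pr12 e (D w) - pr21 e (D w) := by
  have h := hD.lie.map_adRight_pow_bracket hD.map_idem e w
  rwa [bracket_eq_zero_of_mem_rctr hD.map_idem, _root_.map_zero, zero_add,
    bracket_left_eq_pr12_sub_pr21, bracket_left_eq_pr12_sub_pr21, map_sub, map_sub,
    adRight_pow_P12 (he.pr12_mem w), adRight_pow_P21 (he.pr21_mem w),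
    adRight_pow_P12 (he.pr12_mem _), adRight_pow_P21 (he.pr21_mem _)] at h

theorem map_neg_P21 (hD : PeirceLieDeriv e m D) (he : AltPeirce e) {y : R} (hy : y ∈ P21 e) :
    D (-y) = -D y := by
  have h := hD.map_zsmul_pr12_sub_pr21 he y
  rwa [pr12_of_P21 hy, pr21_of_P21 hy, pr12_of_P21 (hD.map_P21 y hy),
    pr21_of_P21 (hD.map_P21 y hy), smul_zero, zero_sub, zero_sub] at h

theorem map_zsmul_P12 (hD : PeirceLieDeriv e m D) (he : AltPeirce e) {x : R} (hx : x ∈ P12 e) :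
    D ((-1 : ℤ) ^ m • x) = (-1 : ℤ) ^ m • D x := by
  have h := hD.map_zsmul_pr12_sub_pr21 he x
  rwa [pr12_of_P12 hx, pr21_of_P12 hx, pr12_of_P12 (hD.map_P12 x hx),
    pr21_of_P12 (hD.map_P12 x hx), sub_zero, sub_zero] at h

theorem pr_map_add_P21 (hD : PeirceLieDeriv e m D) (he : AltPeirce e) {d s : R}
    (hd : d ∈ peirceDiag e) (hs : s ∈ P21 e) :
    pr12 e (D (d + s)) = 0 ∧ pr21 e (D (d + s)) = D s := by
  have h := hD.map_zsmul_pr12_sub_pr21 he (d + s)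
  obtain ⟨hd12, hd21⟩ := he.mem_peirceDiag_iff_pr.mp hd
  rw [map_add, map_add, hd12, hd21, pr12_of_P21 hs, pr21_of_P21 hs, add_zero, zero_add,
    smul_zero, zero_sub, hD.map_neg_P21 he hs] at h
  have h12 := congrArg (pr12 e) h
  have h21 := congrArg (pr21 e) h
  rw [map_neg, pr12_of_P21 (hD.map_P21 s hs), neg_zero,
    pr12_zsmul_sub _ (he.pr12_mem _) (he.pr21_mem _)] at h12
  rw [map_neg, pr21_of_P21 (hD.map_P21 s hs), pr21_zsmul_sub _ (he.pr12_mem _) (he.pr21_mem _),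
    neg_inj] at h21
  exact ⟨neg_one_pow_zsmul_injective m (h12.symm.trans (smul_zero _).symm), h21.symm⟩

theorem pr_map_add_P12 (hD : PeirceLieDeriv e m D) (he : AltPeirce e) {d r : R}
    (hd : d ∈ peirceDiag e) (hr : r ∈ P12 e) :
    pr12 e (D (d + r)) = D r ∧ pr21 e (D (d + r)) = 0 := by
  have h := hD.map_zsmul_pr12_sub_pr21 he (d + r)
  obtain ⟨hd12, hd21⟩ := he.mem_peirceDiag_iff_pr.mp hd
  rw [map_add, map_add, hd12, hd21, pr12_of_P12 hr, pr21_of_P12 hr, add_zero, zero_add,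
    sub_zero, hD.map_zsmul_P12 he hr] at h
  have h12 := congrArg (pr12 e) h
  have h21 := congrArg (pr21 e) h
  rw [map_zsmul, pr12_of_P12 (hD.map_P12 r hr),
    pr12_zsmul_sub _ (he.pr12_mem _) (he.pr21_mem _)] at h12
  rw [map_zsmul, pr21_of_P12 (hD.map_P12 r hr), smul_zero,
    pr21_zsmul_sub _ (he.pr12_mem _) (he.pr21_mem _), zero_eq_neg] at h21
  exact ⟨(neg_one_pow_zsmul_injective m h12).symm, h21⟩

theorem map_peirceDiag (hD : PeirceLieDeriv e m D) (he : AltPeirce e) {d : R}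
    (hd : d ∈ peirceDiag e) : D d ∈ peirceDiag e := by
  have h := hD.pr_map_add_P12 he hd (P12.addSubgroup e).zero_mem
  rw [add_zero, hD.map_zero] at h
  exact he.mem_peirceDiag_iff_pr.mpr h

theorem map_add_sub_sub_mem_rctr (hD : PeirceLieDeriv e m D) (he : AltPeirce e)
    (hN : PeirceNondeg e) {d s : R} (hd : d ∈ peirceDiag e) (hs : s ∈ P21 e) :
    D (d + s) - D d - D s ∈ rctr R := by
  obtain ⟨hW12, hW21⟩ := hD.pr_map_add_P21 he hd hs
  set V := D (d + s) - D s with hV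
  have hVd : V ∈ peirceDiag e := he.mem_peirceDiag_iff_pr.mpr
    ⟨by rw [map_sub, hW12, pr12_of_P21 (hD.map_P21 s hs), sub_zero],
      by rw [map_sub, hW21, pr21_of_P21 (hD.map_P21 s hs), sub_self]⟩
  rw [sub_right_comm]
  refine hN.mem_rctr_of_bracket_P12 he ((peirceDiag e).sub_mem hVd (hD.map_peirceDiag he hd))
    fun x hx => ?_
  -- compare the `P12`-components of `D (± [x, d + s])` and `D (± [x, d])`
  have h := hD.map_zsmul_bracket_P12 hx (d + s)
  rw [bracket_add_right, smul_add, add_comm] at h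
  have h12 := congrArg (pr12 e) h
  rw [(hD.pr_map_add_P12 he ((peirceDiag e).zsmul_mem (he.bracket_P12_P21 hx hs) _)
      ((P12.addSubgroup e).zsmul_mem (he.bracket_P12_peirceDiag hx hd) _)).1,
    hD.map_zsmul_bracket_P12 hx d, show D (d + s) = V + D s by rw [hV, sub_add_cancel],
    map_zsmul, map_add, bracket_add_right, bracket_add_right, map_add, map_add,
    pr12_of_P12 (he.bracket_P12_peirceDiag (hD.map_P12 x hx) hd),
    pr12_of_P12 (he.bracket_P12_peirceDiag hx hVd),
    (he.mem_peirceDiag_iff_pr.mp (he.bracket_P12_P21 (hD.map_P12 x hx) hs)).1,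
    (he.mem_peirceDiag_iff_pr.mp (he.bracket_P12_P21 hx (hD.map_P21 s hs))).1, add_zero,
    add_zero] at h12
  rw [bracket_comm, bracket_sub_right, add_left_cancel (neg_one_pow_zsmul_injective m h12),
    sub_self, neg_zero]

theorem map_add_sub_mem_rctr (hD : PeirceLieDeriv e m D) (he : AltPeirce e)
    (hN : PeirceNondeg e) {d s : R} (hd : d ∈ peirceDiag e) (hDd : D d ∈ rctr R)
    (hs : s ∈ P21 e) : D (d + s) - D s ∈ rctr R := by
  have h := add_mem_rctr (hD.map_add_sub_sub_mem_rctr he hN hd hs) hDd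
  rwa [sub_right_comm, sub_add_cancel] at h

theorem map_one_sub_mem_rctr (hD : PeirceLieDeriv e m D) (he : AltPeirce e)
    (hN : PeirceNondeg e) : D (1 - e) ∈ rctr R := by
  refine hN.mem_rctr_of_bracket_P21 he
    (hD.map_peirceDiag he (mem_peirceDiag_of_P22 he.one_sub_mem_P22)) fun y hy => ?_
  have h := hD.map_bracket_P21 hy (1 - e)
  rw [bracket_comm, bracket_one_sub_P21 hy, hD.map_neg_P21 he hy, bracket_comm,
    bracket_one_sub_P21 (hD.map_P21 y hy), left_eq_add] at h
  rw [bracket_comm, h, neg_zero]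

theorem bracket_pr21_map_add_sub_mem_rctr (hD : PeirceLieDeriv e m D) (he : AltPeirce e)
    (hN : PeirceNondeg e) {a b x : R} (ha : a ∈ P12 e) (hb : b ∈ P21 e) (hx : x ∈ P12 e) :
    bracket x (pr21 e (D (a + b)) - D b) ∈ rctr R := by
  set W := D (a + b)
  have hc := hD.map_add_sub_sub_mem_rctr he hN
    ((peirceDiag e).zsmul_mem (he.bracket_P12_P21 hx hb) ((-1 : ℤ) ^ m))
    ((P21.addSubgroup e).zsmul_mem (he.bracket_P12_P12 hx ha) ((-1 : ℤ) ^ m))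
  rw [← smul_add, ← bracket_add_right, add_comm b a, hD.map_zsmul_bracket_P12 hx,
    hD.map_zsmul_bracket_P12 hx] at hc
  have hxW : bracket x W =
      bracket x (pr12 e W) + bracket x (pr11 e W + pr22 e W) + bracket x (pr21 e W) := by
    rw [← bracket_add_right, ← bracket_add_right]
    congr 1
    conv_lhs => rw [← pr_sum e W]
    abel
  -- the central element `hc` splits into components in `P21`, `P12` and the diagonal
  have hdiag := he.mem_rctr_of_add_P21_P12
    ((P21.addSubgroup e).sub_mem ((P21.addSubgroup e).zsmul_mem ((P21.addSubgroup e).add_mem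
      (he.bracket_P12_P12 (hD.map_P12 x hx) ha) (he.bracket_P12_P12 hx (he.pr12_mem W))) _)
      (hD.map_P21 _ ((P21.addSubgroup e).zsmul_mem (he.bracket_P12_P12 hx ha) _)))
    ((P12.addSubgroup e).zsmul_mem (he.bracket_P12_peirceDiag hx ((peirceDiag e).add_mem
      (mem_peirceDiag_of_P11 (he.pr11_mem W)) (mem_peirceDiag_of_P22 (he.pr22_mem W)))) _)
    ((peirceDiag e).zsmul_mem (he.bracket_P12_P21 hx
      ((P21.addSubgroup e).sub_mem (he.pr21_mem W) (hD.map_P21 b hb))) ((-1 : ℤ) ^ m))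
    (by
      convert hc using 1
      rw [hxW, bracket_add_right (D x) a b, bracket_sub_right]
      simp only [smul_add, smul_sub]
      abel)
  simpa only [neg_one_pow_zsmul_zsmul] using zsmul_mem_rctr hdiag ((-1 : ℤ) ^ m)

theorem pr21_map_add_P12_P21 (hD : PeirceLieDeriv e m D) (he : AltPeirce e)
    (hN : PeirceNondeg e) (h3 : ∀ x : R, 3 • x = 0 → x = 0)
    (hc4 : ∀ z ∈ rctr R, z ≠ 0 → ∀ r : R, ∃ s : R, z * s = r) {a b : R} (ha : a ∈ P12 e)
    (hb : b ∈ P21 e) : pr21 e (D (a + b)) = D b := by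
  have hmem : pr21 e (D (a + b)) - D b ∈ P21 e :=
    (P21.addSubgroup e).sub_mem (he.pr21_mem _) (hD.map_P21 b hb)
  refine sub_eq_zero.mp (hN.P21_mul_P12 _ hmem fun x hx => ?_)
  exact (he.mul_eq_zero_of_bracket_mem_rctr h3 hc4 hx hmem
    (hD.bracket_pr21_map_add_sub_mem_rctr he hN ha hb hx)).2

/-- Read off from the `P21`-component of `D [(1 - e) + q, e + p]`, where
`[(1 - e) + q, e + p] = (p + q) + [q, p]`. -/
theorem map_add_P21 (hD : PeirceLieDeriv e m D) (he : AltPeirce e) (hN : PeirceNondeg e)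
    (h3 : ∀ x : R, 3 • x = 0 → x = 0)
    (hc4 : ∀ z ∈ rctr R, z ≠ 0 → ∀ r : R, ∃ s : R, z * s = r) {p q : R} (hp : p ∈ P21 e)
    (hq : q ∈ P21 e) : D (p + q) = D p + D q := by
  have hqp := he.bracket_P21_P21 hq hp
  have hpq : p + q ∈ P21 e := (P21.addSubgroup e).add_mem hp hq
  have hDp := hD.map_P21 p hp
  have hDq := hD.map_P21 q hq
  have hL : (adRight e ^ m) (bracket (1 - e + q) (e + p)) =
      (-1 : ℤ) ^ m • bracket q p + (p + q) := by
    have : bracket (1 - e + q) (e + p) = bracket q p + (p + q) := by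
      simp only [bracket, add_mul, mul_add, sub_mul, mul_sub, one_mul, mul_one, he.idem, hp.1,
        hp.2, hq.1, hq.2]
      abel
    rw [this, map_add, adRight_pow_P12 hqp, adRight_pow_P21 hpq]
  have hR1 : (adRight e ^ m) (bracket (D (1 - e + q)) (e + p)) =
      D q + (-1 : ℤ) ^ m • bracket (D q) p := by
    rw [bracket_left_eq_of_sub_mem_rctr (hD.map_add_sub_mem_rctr he hN
        (mem_peirceDiag_of_P22 he.one_sub_mem_P22) (hD.map_one_sub_mem_rctr he hN) hq),
      bracket_add_right, bracket_P21_e hDq, map_add, adRight_pow_P21 hDq,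
      adRight_pow_P12 (he.bracket_P21_P21 hDq hp)]
  have hR2 : (adRight e ^ m) (bracket (1 - e + q) (D (e + p))) =
      D p + (-1 : ℤ) ^ m • bracket q (D p) := by
    rw [bracket_comm, bracket_left_eq_of_sub_mem_rctr (hD.map_add_sub_mem_rctr he hN
        (mem_peirceDiag_of_P11 he.mem_P11_self) hD.map_idem hp), ← bracket_comm,
      bracket_add_left, bracket_one_sub_P21 hDp, map_add, adRight_pow_P21 hDp,
      adRight_pow_P12 (he.bracket_P21_P21 hq hDp)]
  have h := congrArg (pr21 e) (hD.lie.map_adRight_pow_bracket hD.map_idem (1 - e + q) (e + p))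
  rw [hL, hR1, hR2, hD.pr21_map_add_P12_P21 he hN h3 hc4
      ((P12.addSubgroup e).zsmul_mem hqp _) hpq] at h
  simp only [map_add, map_zsmul, pr21_of_P21 hDq, pr21_of_P21 hDp,
    pr21_of_P12 (he.bracket_P21_P21 hDq hp), pr21_of_P12 (he.bracket_P21_P21 hq hDp),
    smul_zero, add_zero] at h
  rw [h, add_comm]

/-- Computing `D ((b a) y + y (a b)) = -D [y, [b, a]]` directly and through additivity on
`P21`. -/
theorem bracket_map_mul_sub_map_mul (hD : PeirceLieDeriv e m D) (he : AltPeirce e)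
    (hN : PeirceNondeg e) (h3 : ∀ x : R, 3 • x = 0 → x = 0)
    (hc4 : ∀ z ∈ rctr R, z ≠ 0 → ∀ r : R, ∃ s : R, z * s = r) {a b y : R} (ha : a ∈ P12 e)
    (hb : b ∈ P21 e) (hy : y ∈ P21 e) :
    bracket y (D (a * b) - (D a * b + a * D b) - (D (b * a) - (D b * a + b * D a))) = 0 := by
  have hu := he.mul_12_21 ha hb
  have hv := he.mul_21_12 hb ha
  have hvy := he.mul_22_21 hv hy
  have hyu := he.mul_21_11 hy hu
  have hadd := hD.map_add_P21 he hN h3 hc4 hvy hyu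
  have hDyu : D (y * (a * b)) = bracket (D y) (a * b) + bracket y (D (a * b)) := by
    rw [← hD.map_bracket_P21 hy, bracket, he.mul_11_21 hu hy, sub_zero]
  have hDvy : D (-(b * a * y)) = bracket (D y) (b * a) + bracket y (D (b * a)) := by
    rw [← hD.map_bracket_P21 hy, bracket, he.mul_21_22 hy hv, zero_sub]
  have hDsum : D (-(b * a * y + y * (a * b))) =
      bracket (D y) (bracket b a) + bracket y (D (bracket b a)) := by
    rw [← hD.map_bracket_P21 hy, bracket, bracket, mul_sub, sub_mul, he.mul_21_22 hy hv,
      he.mul_11_21 hu hy]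
    congr 1
    abel
  rw [hD.map_neg_P21 he hvy] at hDvy
  rw [hD.map_neg_P21 he ((P21.addSubgroup e).add_mem hvy hyu)] at hDsum
  rw [hD.map_bracket_P21 hb a, show bracket b a = b * a - a * b from rfl,
    bracket_sub_right] at hDsum
  have key : D (a * b) - (D a * b + a * D b) - (D (b * a) - (D b * a + b * D a)) =
      D (a * b) - D (b * a) + (bracket (D b) a + bracket b (D a)) := by
    simp only [bracket]
    abel
  rw [key, bracket_add_right, bracket_sub_right]
  linear_combination (norm := abel) -hadd - hDyu + hDvy - hDsum

/-- Computing `D (b (a b)) = D ((b a) b)` in the two ways `D [b, a b]` and `-D [b, b a]`. -/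
theorem mul_eq_zero_of_map_mul_eq (hD : PeirceLieDeriv e m D) (he : AltPeirce e) {a b : R}
    (ha : a ∈ P12 e) (hb : b ∈ P21 e) {zu zv Δu Δv : R} (hzu : zu ∈ rctr R) (hzv : zv ∈ rctr R)
    (hΔu : Δu ∈ P11 e) (hΔv : Δv ∈ P22 e) (hu : D (a * b) = D a * b + a * D b + zu + Δu)
    (hv : D (b * a) = D b * a + b * D a + zv + Δv) (hcomm : bracket (Δu - Δv) b = 0) :
    b * Δu = 0 := by
  have hDa := hD.map_P12 a ha
  have hDb := hD.map_P21 b hb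
  rw [bracket, sub_mul, mul_sub, he.mul_11_21 hΔu hb, he.mul_21_22 hb hΔv, zero_sub,
    sub_zero] at hcomm
  have h1 : D (b * (a * b)) = bracket (D b) (a * b) + bracket b (D (a * b)) := by
    rw [← hD.map_bracket_P21 hb, bracket, he.mul_11_21 (he.mul_12_21 ha hb) hb, sub_zero]
  have h2 : D (-(b * a * b)) = bracket (D b) (b * a) + bracket b (D (b * a)) := by
    rw [← hD.map_bracket_P21 hb, bracket, he.mul_21_22 hb (he.mul_21_12 hb ha), zero_sub]
  rw [hD.map_neg_P21 he (he.mul_22_21 (he.mul_21_12 hb ha) hb), he.alt.flexible] at h2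
  rw [hu] at h1
  rw [hv] at h2
  simp only [bracket, mul_add, add_mul, he.mul_11_21, he.mul_21_22, he.mul_12_21, he.mul_21_12,
    ha, hb, hDa, hDb, hΔu, hΔv, add_zero, zero_add, sub_zero, zero_sub] at h1 h2
  have hA := he.alt.associator_add_associator_reverse b a (D b)
  have hF := he.alt.flexible b (D a)
  rw [associator, associator] at hA
  apply he.two_torsion
  linear_combination (norm := abel) -h1 - h2 - hcomm + hA + hF + hzu b + hzv b

/-- Removing the central parts `zu`, `zv` leaves defects `Δu ∈ P11`, `Δv ∈ P22`; `Δu - Δv`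
commutes with `P21`, hence is central, and `b Δu = 0`. -/
theorem map_mul_sub_mem_rctr (hD : PeirceLieDeriv e m D) (he : AltPeirce e)
    (hN : PeirceNondeg e) (h3 : ∀ x : R, 3 • x = 0 → x = 0)
    (hc4 : ∀ z ∈ rctr R, z ≠ 0 → ∀ r : R, ∃ s : R, z * s = r) {a b : R} (ha : a ∈ P12 e)
    (hb : b ∈ P21 e) {zu zv : R} (hzu : zu ∈ rctr R) (hzv : zv ∈ rctr R)
    (hu : pr22 e (D (a * b)) = zu * (1 - e)) (hv : pr11 e (D (b * a)) = zv * e) :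
    D (a * b) - (D a * b + a * D b) ∈ rctr R ∧ D (b * a) - (D b * a + b * D a) ∈ rctr R := by
  have hDa := hD.map_P12 a ha
  have hDb := hD.map_P21 b hb
  have hΔu := he.sub_sub_mem_P11
    (hD.map_peirceDiag he (mem_peirceDiag_of_P11 (he.mul_12_21 ha hb)))
    ((P11.addSubgroup e).add_mem (he.mul_12_21 hDa hb) (he.mul_12_21 ha hDb)) hzu hu
  have hΔv := he.sub_sub_mem_P22
    (hD.map_peirceDiag he (mem_peirceDiag_of_P22 (he.mul_21_12 hb ha)))
    ((P22.addSubgroup e).add_mem (he.mul_21_12 hDb ha) (he.mul_21_12 hb hDa)) hzv hv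
  set Δu := D (a * b) - (D a * b + a * D b) - zu with hΔu_def
  set Δv := D (b * a) - (D b * a + b * D a) - zv with hΔv_def
  have hcomm : ∀ y ∈ P21 e, bracket (Δu - Δv) y = 0 := fun y hy => by
    rw [bracket_comm, show Δu - Δv = D (a * b) - (D a * b + a * D b) -
      (D (b * a) - (D b * a + b * D a)) - (zu - zv) by rw [hΔu_def, hΔv_def]; abel,
      bracket_sub_right, hD.bracket_map_mul_sub_map_mul he hN h3 hc4 ha hb hy, bracket_comm,
      bracket_eq_zero_of_mem_rctr (sub_mem_rctr hzu hzv), neg_zero, sub_zero, neg_zero]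
  have hQ : Δu - Δv ∈ rctr R := hN.mem_rctr_of_bracket_P21 he
    ((peirceDiag e).sub_mem (mem_peirceDiag_of_P11 hΔu) (mem_peirceDiag_of_P22 hΔv)) hcomm
  have hbΔu := hD.mul_eq_zero_of_map_mul_eq he ha hb hzu hzv hΔu hΔv (by rw [hΔu_def]; abel)
    (by rw [hΔv_def]; abel) (hcomm b hb)
  rcases he.eq_zero_or_eq_zero_of_sub_mem_rctr h3 hc4 hΔu hΔv hQ hb hbΔu with ⟨hu0, hv0⟩ | hb0
  · exact ⟨sub_eq_zero.mp hu0 ▸ hzu, sub_eq_zero.mp hv0 ▸ hzv⟩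
  · simp only [hb0, mul_zero, zero_mul, hD.map_zero, add_zero, sub_zero]
    exact ⟨zero_mem_rctr, zero_mem_rctr⟩

end PeirceLieDeriv

end

theorem stmt18_general {R : Type*} [NonAssocRing R] (halt : IsAlt R)
    (e₁ e₂ : R) (he₂ : e₂ = 1 - e₁)
    (he : e₁ * e₁ = e₁)
    (n : ℕ) (hn : 2 ≤ n)
    (htor : ∀ k ∈ ({2, 3, n - 1, n - 3} : Set ℕ), 1 ≤ k → ∀ x : R, k • x = 0 → x = 0)
    (hc1 : (∀ x ∈ P12 e₁, (∀ y ∈ P21 e₁, x * y = 0) → x = 0) ∧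
           (∀ x ∈ P21 e₁, (∀ y ∈ P12 e₁, x * y = 0) → x = 0))
    (hc2 : (∀ x ∈ P11 e₁, (∀ y ∈ P12 e₁, x * y = 0) → x = 0) ∧
           (∀ x ∈ P11 e₁, (∀ y ∈ P21 e₁, y * x = 0) → x = 0))
    (hc3 : (∀ x ∈ P22 e₁, (∀ y ∈ P12 e₁, y * x = 0) → x = 0) ∧
           (∀ x ∈ P22 e₁, (∀ y ∈ P21 e₁, x * y = 0) → x = 0))
    (hc4 : ∀ z ∈ rctr R, z ≠ 0 → ∀ r : R, ∃ s : R, z * s = r)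
    (D : R → R) (hD : IsMultLieNDeriv n D)
    (ha : ∀ a ∈ P11 e₁, ∃ z ∈ rctr R, (e₂ * D a) * e₂ = z * e₂)
    (hb : ∀ a ∈ P22 e₁, ∃ z ∈ rctr R, (e₁ * D a) * e₁ = z * e₁)
    (hcc : (∀ a ∈ P12 e₁, D a ∈ P12 e₁) ∧ (∀ a ∈ P21 e₁, D a ∈ P21 e₁))
    (hDe₁ : D e₁ ∈ rctr R)
    :
    (∀ a ∈ P12 e₁, ∀ b ∈ P21 e₁, D (a * b) - (D a * b + a * D b) ∈ rctr R) ∧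
    (∀ a ∈ P21 e₁, ∀ b ∈ P12 e₁, D (a * b) - (D a * b + a * D b) ∈ rctr R) := by
  subst he₂
  obtain ⟨m, rfl⟩ : ∃ m, n = m + 2 := ⟨n - 2, by omega⟩
  have hP : AltPeirce e₁ := ⟨halt, he, htor 2 (by simp) (by norm_num)⟩
  have hN : PeirceNondeg e₁ := ⟨hc1.1, hc1.2, hc2.1, hc2.2, hc3.1, hc3.2⟩
  have hL : PeirceLieDeriv e₁ m D := ⟨hD, hDe₁, hcc.1, hcc.2⟩
  have key : ∀ a ∈ P12 e₁, ∀ b ∈ P21 e₁, D (a * b) - (D a * b + a * D b) ∈ rctr R ∧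
      D (b * a) - (D b * a + b * D a) ∈ rctr R := fun a ha' b hb' => by
    obtain ⟨zu, hzu, hu⟩ := ha _ (hP.mul_12_21 ha' hb')
    obtain ⟨zv, hzv, hv⟩ := hb _ (hP.mul_21_12 hb' ha')
    exact hL.map_mul_sub_mem_rctr hP hN (htor 3 (by simp) (by norm_num)) hc4 ha' hb' hzu hzv hu hv
  exact ⟨fun a ha' b hb' => (key a ha' b hb').1, fun a ha' b hb' => (key b hb' a ha').2⟩

theorem stmt18 {R : Type*} [NonAssocRing R] (halt : IsAlt R)
    (e₁ e₂ : R) (he₂ : e₂ = 1 - e₁)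
    (he : e₁ * e₁ = e₁) (hne0 : e₁ ≠ 0) (hne1 : e₁ ≠ 1)
    (n : ℕ) (hn : 2 ≤ n)
    (htor : ∀ k ∈ ({2, 3, n - 1, n - 3} : Set ℕ), 1 ≤ k → ∀ x : R, k • x = 0 → x = 0)
    (hc1 : (∀ x ∈ P12 e₁, (∀ y ∈ P21 e₁, x * y = 0) → x = 0) ∧
           (∀ x ∈ P21 e₁, (∀ y ∈ P12 e₁, x * y = 0) → x = 0))
    (hc2 : (∀ x ∈ P11 e₁, (∀ y ∈ P12 e₁, x * y = 0) → x = 0) ∧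
           (∀ x ∈ P11 e₁, (∀ y ∈ P21 e₁, y * x = 0) → x = 0))
    (hc3 : (∀ x ∈ P22 e₁, (∀ y ∈ P12 e₁, y * x = 0) → x = 0) ∧
           (∀ x ∈ P22 e₁, (∀ y ∈ P21 e₁, x * y = 0) → x = 0))
    (hc4 : ∀ z ∈ rctr R, z ≠ 0 → ∀ r : R, ∃ s : R, z * s = r)
    (D : R → R) (hD : IsMultLieNDeriv n D)
    (ha : ∀ a ∈ P11 e₁, ∃ z ∈ rctr R, (e₂ * D a) * e₂ = z * e₂)
    (hb : ∀ a ∈ P22 e₁, ∃ z ∈ rctr R, (e₁ * D a) * e₁ = z * e₁)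
    (hcc : (∀ a ∈ P12 e₁, D a ∈ P12 e₁) ∧ (∀ a ∈ P21 e₁, D a ∈ P21 e₁))
    (hDe₁ : D e₁ ∈ rctr R)
    :
    (∀ a ∈ P12 e₁, ∀ b ∈ P21 e₁, D (a * b) - (D a * b + a * D b) ∈ rctr R) ∧
    (∀ a ∈ P21 e₁, ∀ b ∈ P12 e₁, D (a * b) - (D a * b + a * D b) ∈ rctr R) :=
  stmt18_general halt e₁ e₂ he₂ he n hn htor hc1 hc2 hc3 hc4 D hD ha hb hcc hDe₁
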